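/- Let φ(t) = (t^n, y(t)) be a primitive prepared Puiseux parametrization of a branch Γ: 2 ≤ n < m where m = ord_t y(t), n does not divide m, and gcd({n} ∪ {i : coefficient of t^i in y(t) is nonzero}) = 1. Let j > m and suppose j belongs to the semigroup S_Γ, i.e. there exists g ∈ ℂ[[x,y]] with ord_t g(t^n, y(t)) = j. Then there exists a singular vector field with vanishing linear part realizing j as its contact exponent with Γ: concretely, there exist A, B ∈ m² ⊂ ℂ[[x,y]] such that ord_t( A(t^n,y(t))·y'(t) − B(t^n,y(t))·n·t^{n−1} ) + 1 = j + n, i.e. υ_Γ(ω_X) = j + n for X = A ∂/∂x + B ∂/∂y. -/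

import Mathlib

/-!
Take `g` with `ord_t g(t^n, y(t)) = j` and the vector field `g ∂/∂y`, i.e. `A = 0`, `B = g`.
Its contact order is `ord_t (g(φ) · n t^{n-1}) + 1 = j + n`, and `g` has no linear part:
in `g(t^n, y(t))` the monomials `1`, `x`, `y` are the only ones contributing to the orders
`0`, `n`, `m` respectively (because `n < m` and `n ∤ m`), and all these orders lie below `j`.
-/

open PowerSeries

/-- Substitution of `(x(t), y(t))` (both with zero constant term) into a
two-variable formal power series. -/
noncomputable def substPS (xt yt : PowerSeries ℂ) (f : MvPowerSeries (Fin 2) ℂ) :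
    PowerSeries ℂ :=
  PowerSeries.mk fun k =>
    ∑ ij ∈ Finset.range (k + 1) ×ˢ Finset.range (k + 1),
      MvPowerSeries.coeff (Finsupp.single 0 ij.1 + Finsupp.single 1 ij.2) f *
        PowerSeries.coeff k (xt ^ ij.1 * yt ^ ij.2)

/-- The maximal ideal of `ℂ[[x,y]]`: series with zero constant term. -/
noncomputable def mIdeal : Ideal (MvPowerSeries (Fin 2) ℂ) :=
  RingHom.ker (MvPowerSeries.constantCoeff : MvPowerSeries (Fin 2) ℂ →+* ℂ)

lemma MvPowerSeries.constantCoeff_eq_coeff_of_eq_X_mul {σ R : Type*} [CommSemiring R]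
    {s : σ} {f u : MvPowerSeries σ R} (h : f = X s * u) :
    constantCoeff u = coeff (Finsupp.single s 1) f := by
  rw [h, ← add_zero (Finsupp.single s 1), X, coeff_add_monomial_mul, one_mul,
    coeff_zero_eq_constantCoeff_apply]

lemma mem_mIdeal_sq_of_coeff_eq_zero (f : MvPowerSeries (Fin 2) ℂ)
    (h0 : MvPowerSeries.coeff 0 f = 0)
    (h1 : MvPowerSeries.coeff (Finsupp.single 0 1) f = 0)
    (h2 : MvPowerSeries.coeff (Finsupp.single 1 1) f = 0) :
    f ∈ mIdeal ^ 2 := by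
  classical
  -- `p` is the part of `f` free of `x`; then `f - p` is divisible by `x` and `p` by `y`.
  set p : MvPowerSeries (Fin 2) ℂ := fun d => if d 0 = 0 then MvPowerSeries.coeff d f else 0
  have hp : ∀ d, MvPowerSeries.coeff d p = if d 0 = 0 then MvPowerSeries.coeff d f else 0 :=
    fun _ => rfl
  obtain ⟨u, hu⟩ : MvPowerSeries.X 0 ∣ f - p :=
    MvPowerSeries.X_dvd_iff.2 fun d hd => by simp [hp, hd]
  obtain ⟨v, hv⟩ : MvPowerSeries.X 1 ∣ p := MvPowerSeries.X_dvd_iff.2 fun d hd => by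
    rw [hp]
    split_ifs with hd0
    · obtain rfl : d = 0 := by ext i; fin_cases i <;> simp [hd0, hd]
      exact h0
    · rfl
  have hu0 : MvPowerSeries.constantCoeff u = 0 := by
    simp [MvPowerSeries.constantCoeff_eq_coeff_of_eq_X_mul hu, hp, h1]
  have hv0 : MvPowerSeries.constantCoeff v = 0 := by
    simp [MvPowerSeries.constantCoeff_eq_coeff_of_eq_X_mul hv, hp, h2]
  rw [show f = MvPowerSeries.X 0 * u + MvPowerSeries.X 1 * v by rw [← hu, ← hv]; ring, sq]
  exact Ideal.add_mem _ (Ideal.mul_mem_mul (RingHom.mem_ker.2 (by simp)) (RingHom.mem_ker.2 hu0))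
    (Ideal.mul_mem_mul (RingHom.mem_ker.2 (by simp)) (RingHom.mem_ker.2 hv0))

lemma substPS_zero (xt yt : PowerSeries ℂ) : substPS xt yt 0 = 0 := by
  ext k
  simp [substPS]

lemma coeff_substPS_eq_of_forall_ne (xt yt : PowerSeries ℂ) (g : MvPowerSeries (Fin 2) ℂ)
    {k a b : ℕ} (ha : a ≤ k) (hb : b ≤ k)
    (h : ∀ a' b', (a', b') ≠ (a, b) → coeff k (xt ^ a' * yt ^ b') = 0) :
    coeff k (substPS xt yt g) =
      MvPowerSeries.coeff (Finsupp.single 0 a + Finsupp.single 1 b) g *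
        coeff k (xt ^ a * yt ^ b) := by
  rw [substPS, coeff_mk, Finset.sum_eq_single_of_mem (a, b)
    (Finset.mem_product.2 ⟨Finset.mem_range_succ_iff.2 ha, Finset.mem_range_succ_iff.2 hb⟩)]
  rintro ⟨a', b'⟩ - hne
  rw [h a' b' hne, mul_zero]

lemma coeff_zero_substPS (xt yt : PowerSeries ℂ) (g : MvPowerSeries (Fin 2) ℂ) :
    coeff 0 (substPS xt yt g) = MvPowerSeries.coeff 0 g := by
  simp [substPS]

section PreparedBranch

variable {n m : ℕ} {y : PowerSeries ℂ}

lemma coeff_X_pow_pow_mul_pow_eq_zero (hlow : ∀ i < m, coeff i y = 0) {k a b : ℕ}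
    (hk : k < n * a + m * b) : coeff k ((X ^ n) ^ a * y ^ b) = 0 := by
  obtain ⟨z, rfl⟩ := X_pow_dvd_iff.2 hlow
  rw [mul_pow, ← mul_assoc, ← pow_mul, ← pow_mul, ← pow_add, coeff_X_pow_mul',
    if_neg (by omega)]

lemma coeff_X_pow_pow_mul_pow_zero_eq_zero {k a : ℕ} (hk : k ≠ n * a) :
    coeff k ((X ^ n) ^ a * y ^ 0) = 0 := by
  rw [pow_zero, mul_one, ← pow_mul, coeff_X_pow, if_neg hk]

lemma coeff_n_substPS_eq_coeff_x (hn : n ≠ 0) (hnm : n < m) (hlow : ∀ i < m, coeff i y = 0)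
    (g : MvPowerSeries (Fin 2) ℂ) :
    coeff n (substPS (X ^ n) y g) = MvPowerSeries.coeff (Finsupp.single 0 1) g := by
  have hx := coeff_substPS_eq_of_forall_ne (X ^ n) y g (a := 1) (b := 0)
    (Nat.one_le_iff_ne_zero.2 hn) (Nat.zero_le _) fun a b hab => by
      rcases Nat.eq_zero_or_pos b with rfl | hb
      · exact coeff_X_pow_pow_mul_pow_zero_eq_zero fun h =>
          hab (by rw [(Nat.mul_eq_left hn).1 h.symm])
      · exact coeff_X_pow_pow_mul_pow_eq_zero hlow (by nlinarith)
  simpa using hx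

lemma coeff_m_substPS_eq_coeff_y (hn : n ≠ 0) (hnd : ¬ n ∣ m) (hlow : ∀ i < m, coeff i y = 0)
    (g : MvPowerSeries (Fin 2) ℂ) :
    coeff m (substPS (X ^ n) y g) = MvPowerSeries.coeff (Finsupp.single 1 1) g * coeff m y := by
  have hm : m ≠ 0 := by rintro rfl; exact hnd (dvd_zero n)
  have hy := coeff_substPS_eq_of_forall_ne (X ^ n) y g (a := 0) (b := 1)
    (Nat.zero_le _) (Nat.one_le_iff_ne_zero.2 hm) fun a b hab => by
      rcases Nat.lt_trichotomy b 1 with hb | rfl | hb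
      · obtain rfl : b = 0 := by omega
        exact coeff_X_pow_pow_mul_pow_zero_eq_zero fun h => hnd ⟨a, h⟩
      · have ha : 0 < a := Nat.pos_of_ne_zero fun ha => hab (by rw [ha])
        exact coeff_X_pow_pow_mul_pow_eq_zero hlow (by nlinarith [Nat.pos_of_ne_zero hn])
      · exact coeff_X_pow_pow_mul_pow_eq_zero hlow (by nlinarith [Nat.pos_of_ne_zero hm])
  simpa using hy

lemma mem_mIdeal_sq_of_lt_order_substPS (hn : n ≠ 0) (hnm : n < m) (hnd : ¬ n ∣ m)
    (hlow : ∀ i < m, coeff i y = 0) (hm : coeff m y ≠ 0) {g : MvPowerSeries (Fin 2) ℂ}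
    (hg : (m : ℕ∞) < order (substPS (X ^ n) y g)) : g ∈ mIdeal ^ 2 := by
  have hvanish : ∀ k ≤ m, coeff k (substPS (X ^ n) y g) = 0 := fun k hk =>
    coeff_of_lt_order k (lt_of_le_of_lt (by exact_mod_cast hk) hg)
  refine mem_mIdeal_sq_of_coeff_eq_zero g ?_ ?_ ?_
  · rw [← coeff_zero_substPS (X ^ n) y g, hvanish 0 (Nat.zero_le _)]
  · rw [← coeff_n_substPS_eq_coeff_x hn hnm hlow g, hvanish n hnm.le]
  · have := coeff_m_substPS_eq_coeff_y hn hnd hlow g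
    rw [hvanish m le_rfl, eq_comm, mul_eq_zero] at this
    exact this.resolve_right hm

end PreparedBranch

theorem semigroup_element_realized_by_vanishing_linear_part_general
    (n m : ℕ) (hn : 2 ≤ n) (hnm : n < m) (hnd : ¬ n ∣ m)
    (y : PowerSeries ℂ)
    (hlow : ∀ i < m, PowerSeries.coeff i y = 0)
    (hm : PowerSeries.coeff m y ≠ 0)
    (j : ℕ) (hj : m < j)
    (hjS : ∃ g : MvPowerSeries (Fin 2) ℂ,
      substPS (PowerSeries.X ^ n) y g ≠ 0 ∧
      PowerSeries.order (substPS (PowerSeries.X ^ n) y g) = (j : ℕ∞)) :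
    ∃ A B : MvPowerSeries (Fin 2) ℂ,
      A ∈ mIdeal ^ 2 ∧ B ∈ mIdeal ^ 2 ∧
      PowerSeries.order
          (substPS (PowerSeries.X ^ n) y A * PowerSeries.derivativeFun y -
            substPS (PowerSeries.X ^ n) y B *
              (PowerSeries.C (n : ℂ) * PowerSeries.X ^ (n - 1))) + 1
        = ((j + n : ℕ) : ℕ∞) := by
  obtain ⟨g, -, hg⟩ := hjS
  have hn0 : n ≠ 0 := by omega
  refine ⟨0, g, Ideal.zero_mem _,
    mem_mIdeal_sq_of_lt_order_substPS hn0 hnm hnd hlow hm (by rw [hg]; exact_mod_cast hj), ?_⟩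
  rw [substPS_zero, zero_mul, zero_sub, order_neg, order_mul, hg, ← monomial_eq_C_mul_X_pow,
    order_monomial_of_ne_zero _ _ (Nat.cast_ne_zero.2 hn0)]
  norm_cast
  omega

theorem semigroup_element_realized_by_vanishing_linear_part
    (n m : ℕ) (hn : 2 ≤ n) (hnm : n < m) (hnd : ¬ n ∣ m)
    (y : PowerSeries ℂ)
    (hlow : ∀ i < m, PowerSeries.coeff i y = 0)
    (hm : PowerSeries.coeff m y ≠ 0)
    (hprim : ∀ d : ℕ, d ∣ n → (∀ i, PowerSeries.coeff i y ≠ 0 → d ∣ i) → d = 1)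
    (j : ℕ) (hj : m < j)
    (hjS : ∃ g : MvPowerSeries (Fin 2) ℂ,
      substPS (PowerSeries.X ^ n) y g ≠ 0 ∧
      PowerSeries.order (substPS (PowerSeries.X ^ n) y g) = (j : ℕ∞)) :
    ∃ A B : MvPowerSeries (Fin 2) ℂ,
      A ∈ mIdeal ^ 2 ∧ B ∈ mIdeal ^ 2 ∧
      PowerSeries.order
          (substPS (PowerSeries.X ^ n) y A * PowerSeries.derivativeFun y -
            substPS (PowerSeries.X ^ n) y B *
              (PowerSeries.C (n : ℂ) * PowerSeries.X ^ (n - 1))) + 1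
        = ((j + n : ℕ) : ℕ∞) :=
  semigroup_element_realized_by_vanishing_linear_part_general n m hn hnm hnd y hlow hm j hj hjS
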